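/- arXiv:2111.11897 — 7 statements merged into one kernel-verified Lean document; each statement's English description precedes it below -/
import Mathlib

section
/- Let r ≥ 2 be an integer, let G be a simple graph and let u be a vertex of G. Suppose that the neighbourhood N(u) contains a set I of r(r−1) pairwise non-adjacent vertices, and that there is a set D ⊆ N(u) with |D| ≤ r−1 such that every vertex of N(u) is in D or adjacent to a vertex of D. Then there exists a vertex v ∈ N(u) (so u and v are adjacent) such that both u and v have r pairwise non-adjacent neighbours, i.e., u and v are adjacent centres of induced copies of K_{1,r}. -/
/-- If `N(u)` contains `r(r-1)` pairwise non-adjacent vertices and is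
dominated by at most `r-1` of its vertices, then there is a neighbour `v` of `u`
such that both `u` and `v` have `r` pairwise non-adjacent neighbours. -/
theorem stmt_2 {V : Type*} [Fintype V] [DecidableEq V] (r : ℕ) (hr : 2 ≤ r)
    (G : SimpleGraph V) (u : V)
    (I : Finset V) (hIsub : (I : Set V) ⊆ G.neighborSet u)
    (hIcard : I.card = r * (r - 1))
    (hIindep : (I : Set V).Pairwise fun a b => ¬ G.Adj a b)
    (D : Finset V) (hDsub : (D : Set V) ⊆ G.neighborSet u)
    (hDcard : D.card ≤ r - 1)
    (hDdom : ∀ x ∈ G.neighborSet u, x ∈ D ∨ ∃ y ∈ D, G.Adj y x) :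
    ∃ v ∈ G.neighborSet u,
      (∃ J : Finset V, (J : Set V) ⊆ G.neighborSet u ∧ J.card = r ∧
        (J : Set V).Pairwise fun a b => ¬ G.Adj a b) ∧
      (∃ J : Finset V, (J : Set V) ⊆ G.neighborSet v ∧ J.card = r ∧
        (J : Set V).Pairwise fun a b => ¬ G.Adj a b) := by
  classical
  have hm1 : 1 ≤ r - 1 := by omega
  -- every x ∈ I \ D has a dominator in D \ I
  have hdom : ∀ x ∈ I \ D, ∃ y, y ∈ D \ I ∧ G.Adj y x := by
    intro x hx
    rw [Finset.mem_sdiff] at hx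
    obtain ⟨hxI, hxD⟩ := hx
    rcases hDdom x (hIsub hxI) with h | ⟨y, hyD, hyx⟩
    · exact absurd h hxD
    · refine ⟨y, Finset.mem_sdiff.2 ⟨hyD, ?_⟩, hyx⟩
      intro hyI
      exact hIindep hyI hxI (G.ne_of_adj hyx) hyx
  -- choice function
  set f : V → V := fun x => if hx : ∃ y, y ∈ D \ I ∧ G.Adj y x then hx.choose else x
    with hf_def
  have hf : ∀ x ∈ I \ D, f x ∈ D \ I ∧ G.Adj (f x) x := by
    intro x hx
    have h := hdom x hx
    simp only [hf_def, dif_pos h]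
    exact h.choose_spec
  -- cardinality counting
  have hIDcard : (I ∩ D).card = (D ∩ I).card := by rw [Finset.inter_comm]
  have h1 : (I \ D).card + (I ∩ D).card = I.card := Finset.card_sdiff_add_card_inter ..
  have h2 : (D \ I).card + (D ∩ I).card = D.card := Finset.card_sdiff_add_card_inter ..
  have hlt : (D \ I).card * (r - 1) < (I \ D).card := by
    set m := r - 1 with hm
    set a := (D \ I).card
    set k := (D ∩ I).card
    have hak : a + k ≤ m := by omega
    have hr' : r = m + 1 := by omega
    have hIS : (I \ D).card + (I ∩ D).card = (m + 1) * m := by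
      rw [h1, hIcard, hr']
    have hring : (m + 1) * m = m * m + m := by ring
    have hmul : a * m + k * m ≤ m * m :=
      (add_mul a k m ▸ Nat.mul_le_mul_right m hak)
    have hkm : k ≤ k * m := Nat.le_mul_of_pos_right k (by omega)
    have : a * m + k < m * m + m := by omega
    omega
  obtain ⟨y, hy, hycard⟩ := Finset.exists_lt_card_fiber_of_mul_lt_card_of_maps_to
    (fun x hx => (hf x hx).1) hlt
  obtain ⟨hyD, hyI⟩ := Finset.mem_sdiff.1 hy
  have hyN : y ∈ G.neighborSet u := hDsub hyD
  refine ⟨y, hyN, ?_, ?_⟩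
  · -- J for u : any r-subset of I
    obtain ⟨J, hJI, hJcard⟩ := Finset.exists_subset_card_eq (s := I) (n := r)
      (by rw [hIcard]; nlinarith)
    refine ⟨J, ?_, hJcard, hIindep.mono (by exact_mod_cast hJI)⟩
    intro x hx
    exact hIsub (hJI hx)
  · -- J for y : r-subset of the fiber
    set F := (I \ D).filter (fun x => f x = y) with hF
    obtain ⟨J, hJF, hJcard⟩ := Finset.exists_subset_card_eq (s := F) (n := r)
      (by omega)
    have hJI : J ⊆ I := fun x hx => (Finset.mem_sdiff.1 (Finset.mem_filter.1 (hJF hx)).1).1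
    refine ⟨J, ?_, hJcard, hIindep.mono (by exact_mod_cast hJI)⟩
    intro x hx
    obtain ⟨hxID, hfx⟩ := Finset.mem_filter.1 (hJF hx)
    have := (hf x hxID).2
    rw [hfx] at this
    exact this
end

section
/- For all integers d, k ≥ 1 and r ≥ 2 there exists a constant c (depending only on d, k and r) with the following property: if G is a finite connected simple graph such that (i) every two vertices of G are at distance at most d, (ii) the set of vertices of G having r pairwise non-adjacent neighbours is an independent set, (iii) for every vertex u there is a set D ⊆ N(u) with |D| ≤ r−1 such that every vertex of N(u) is in D or adjacent to a vertex of D, and (iv) G is k-colourable, then G has at most c vertices. -/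
open SimpleGraph Finset

variable {V : Type} [Fintype V] [DecidableEq V]

/-- closed neighbourhood -/
noncomputable def nbhd (G : SimpleGraph V) [DecidableRel G.Adj] (w : V) : Finset V :=
  insert w (G.neighborFinset w)

lemma nbhd_card_le (G : SimpleGraph V) [DecidableRel G.Adj] {Δ : ℕ}
    (hdeg : ∀ v, G.degree v ≤ Δ) (w : V) : (nbhd G w).card ≤ Δ + 1 := by
  calc (nbhd G w).card ≤ (G.neighborFinset w).card + 1 := Finset.card_insert_le _ _
    _ ≤ Δ + 1 := by rw [G.card_neighborFinset_eq_degree]; exact Nat.add_le_add_right (hdeg w) 1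

noncomputable def enc (G : SimpleGraph V) [DecidableRel G.Adj] (w x : V) : ℕ :=
  if h : x ∈ nbhd G w then ((Fintype.equivFin (↥(nbhd G w))) ⟨x, h⟩ : Fin _).val else 0

noncomputable def dec (G : SimpleGraph V) [DecidableRel G.Adj] (w : V) (i : ℕ) : V :=
  if h : ∃ x ∈ nbhd G w, enc G w x = i then h.choose else w

lemma enc_lt (G : SimpleGraph V) [DecidableRel G.Adj] {w x : V} (hx : x ∈ nbhd G w) :
    enc G w x < (nbhd G w).card := by
  rw [enc, dif_pos hx]
  have := ((Fintype.equivFin (↥(nbhd G w))) ⟨x, hx⟩).isLt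
  simpa [Fintype.card_coe] using this

lemma dec_enc (G : SimpleGraph V) [DecidableRel G.Adj] {w x : V} (hx : x ∈ nbhd G w) :
    dec G w (enc G w x) = x := by
  have hex : ∃ y ∈ nbhd G w, enc G w y = enc G w x := ⟨x, hx, rfl⟩
  rw [dec, dif_pos hex]
  obtain ⟨hy, he⟩ := hex.choose_spec
  have e1 : enc G w hex.choose
      = ((Fintype.equivFin (↥(nbhd G w))) ⟨hex.choose, hy⟩ : Fin _).val := dif_pos hy
  have e2 : enc G w x = ((Fintype.equivFin (↥(nbhd G w))) ⟨x, hx⟩ : Fin _).val := dif_pos hx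
  have he' := e1.symm.trans (he.trans e2)
  have h2 : (Fintype.equivFin (↥(nbhd G w))) ⟨hex.choose, hy⟩
      = (Fintype.equivFin (↥(nbhd G w))) ⟨x, hx⟩ := Fin.val_injective he'
  exact Subtype.mk_eq_mk.mp ((Fintype.equivFin (↥(nbhd G w))).injective h2)

lemma ball_bound (G : SimpleGraph V) [DecidableRel G.Adj] {d Δ : ℕ}
    (hconn : G.Connected) (hdiam : ∀ u v : V, G.dist u v ≤ d)
    (hdeg : ∀ v, G.degree v ≤ Δ) : Fintype.card V ≤ (Δ + 1) ^ d := by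
  have hne : Nonempty V := hconn.nonempty
  obtain ⟨u0⟩ := hne
  have hw : ∀ v : V, ∃ p : G.Walk u0 v, p.length ≤ d := by
    intro v
    obtain ⟨p, hp⟩ := (hconn.preconnected u0 v).exists_walk_length_eq_dist
    exact ⟨p, hp ▸ hdiam u0 v⟩
  choose p hp using hw
  have hmem : ∀ (v : V) (i : ℕ), (p v).getVert (i+1) ∈ nbhd G ((p v).getVert i) := by
    intro v i
    by_cases hi : i < (p v).length
    · exact Finset.mem_insert_of_mem (by
        rw [SimpleGraph.mem_neighborFinset]
        exact (p v).adj_getVert_succ hi)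
    · push_neg at hi
      rw [(p v).getVert_of_length_le hi, (p v).getVert_of_length_le (hi.trans (Nat.le_succ i))]
      exact Finset.mem_insert_self _ _
  set code : V → Fin d → Fin (Δ + 1) := fun v i =>
    ⟨enc G ((p v).getVert i) ((p v).getVert (i+1)),
      lt_of_lt_of_le (enc_lt G (hmem v i)) (nbhd_card_le G hdeg _)⟩ with hcode
  have hinj : Function.Injective code := by
    intro v v' hvv'
    have key : ∀ i : ℕ, i ≤ d → (p v).getVert i = (p v').getVert i := by
      intro i
      induction i with
      | zero => intro _; simp
      | succ n ih =>
        intro hn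
        have hnd : n < d := Nat.lt_of_succ_le hn
        have h1 := ih (Nat.le_of_lt hnd)
        have h2 : code v ⟨n, hnd⟩ = code v' ⟨n, hnd⟩ := by rw [hvv']
        have h3 : enc G ((p v).getVert n) ((p v).getVert (n+1))
            = enc G ((p v').getVert n) ((p v').getVert (n+1)) := congrArg Fin.val h2
        calc (p v).getVert (n+1)
            = dec G ((p v).getVert n) (enc G ((p v).getVert n) ((p v).getVert (n+1))) :=
              (dec_enc G (hmem v n)).symm
          _ = dec G ((p v').getVert n) (enc G ((p v').getVert n) ((p v').getVert (n+1))) := by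
              rw [h3, h1]
          _ = (p v').getVert (n+1) := dec_enc G (hmem v' n)
    have := key d le_rfl
    rwa [(p v).getVert_of_length_le (hp v), (p v').getVert_of_length_le (hp v')] at this
  calc Fintype.card V ≤ Fintype.card (Fin d → Fin (Δ + 1)) :=
        Fintype.card_le_of_injective code hinj
    _ = (Δ + 1) ^ d := by simp

lemma deg_bound (G : SimpleGraph V) [DecidableRel G.Adj] {k r : ℕ}
    (hk : 1 ≤ k) (hr : 2 ≤ r)
    (hcent : ({u : V | ∃ J : Finset V, (J : Set V) ⊆ G.neighborSet u ∧ J.card = r ∧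
          (J : Set V).Pairwise fun a b => ¬ G.Adj a b}.Pairwise
        fun a b => ¬ G.Adj a b))
    (hdom : ∀ u : V, ∃ D : Finset V, (D : Set V) ⊆ G.neighborSet u ∧ D.card ≤ r - 1 ∧
          ∀ x ∈ G.neighborSet u, x ∈ D ∨ ∃ y ∈ D, G.Adj y x)
    (hcol : G.Colorable k) (u : V) :
    G.degree u ≤ (r - 1) * (1 + k * (r - 1)) := by
  obtain ⟨D, hD1, hD2, hD3⟩ := hdom u
  -- common neighbourhood bound
  have common : ∀ y : V, G.Adj u y →
      (G.neighborFinset y ∩ G.neighborFinset u).card ≤ k * (r - 1) := by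
    intro y hy
    by_contra hcon
    push_neg at hcon
    set S := G.neighborFinset y ∩ G.neighborFinset u with hS
    obtain ⟨C⟩ := hcol
    have hmap : ∀ a ∈ S, C a ∈ (Finset.univ : Finset (Fin k)) := fun a _ => Finset.mem_univ _
    have hlt : (Finset.univ : Finset (Fin k)).card * (r - 1) < S.card := by
      simpa using hcon
    obtain ⟨b, -, hb⟩ := Finset.exists_lt_card_fiber_of_mul_lt_card_of_maps_to hmap hlt
    have hrb : r ≤ (S.filter fun a => C a = b).card := by omega
    obtain ⟨J, hJS, hJcard⟩ := Finset.exists_subset_card_eq hrb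
    have hJpair : (J : Set V).Pairwise fun a b => ¬ G.Adj a b := by
      intro a ha b' hb' hab
      intro hadj
      have h1 := (Finset.mem_filter.mp (hJS ha)).2
      have h2 := (Finset.mem_filter.mp (hJS hb')).2
      exact C.valid hadj (h1.trans h2.symm)
    have hu : u ∈ {u : V | ∃ J : Finset V, (J : Set V) ⊆ G.neighborSet u ∧ J.card = r ∧
        (J : Set V).Pairwise fun a b => ¬ G.Adj a b} := by
      refine ⟨J, ?_, hJcard, hJpair⟩
      intro a ha
      have := Finset.mem_of_mem_filter a (hJS ha)
      rw [hS, Finset.mem_inter] at this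
      exact (SimpleGraph.mem_neighborFinset _ _ _).mp this.2
    have hyc : y ∈ {u : V | ∃ J : Finset V, (J : Set V) ⊆ G.neighborSet u ∧ J.card = r ∧
        (J : Set V).Pairwise fun a b => ¬ G.Adj a b} := by
      refine ⟨J, ?_, hJcard, hJpair⟩
      intro a ha
      have := Finset.mem_of_mem_filter a (hJS ha)
      rw [hS, Finset.mem_inter] at this
      exact (SimpleGraph.mem_neighborFinset _ _ _).mp this.1
    exact hcent hu hyc (G.ne_of_adj hy) hy
  -- main count
  have hsub : G.neighborFinset u ⊆
      D ∪ D.biUnion (fun y => G.neighborFinset y ∩ G.neighborFinset u) := by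
    intro x hx
    rcases hD3 x (by simpa using hx) with hxD | ⟨y, hyD, hyx⟩
    · exact Finset.mem_union_left _ hxD
    · refine Finset.mem_union_right _ (Finset.mem_biUnion.mpr ⟨y, hyD, ?_⟩)
      exact Finset.mem_inter.mpr ⟨(SimpleGraph.mem_neighborFinset _ _ _).mpr hyx, hx⟩
  have hDadj : ∀ y ∈ D, G.Adj u y := by
    intro y hy
    exact hD1 hy
  calc G.degree u = (G.neighborFinset u).card := (G.card_neighborFinset_eq_degree u).symm
    _ ≤ (D ∪ D.biUnion (fun y => G.neighborFinset y ∩ G.neighborFinset u)).card :=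
        Finset.card_le_card hsub
    _ ≤ D.card + (D.biUnion (fun y => G.neighborFinset y ∩ G.neighborFinset u)).card :=
        Finset.card_union_le _ _
    _ ≤ D.card + ∑ y ∈ D, (G.neighborFinset y ∩ G.neighborFinset u).card :=
        Nat.add_le_add_left (Finset.card_biUnion_le) _
    _ ≤ (r - 1) + (r - 1) * (k * (r - 1)) := by
        refine Nat.add_le_add hD2 ?_
        calc ∑ y ∈ D, (G.neighborFinset y ∩ G.neighborFinset u).card
            ≤ ∑ y ∈ D, k * (r - 1) := Finset.sum_le_sum (fun y hy => common y (hDadj y hy))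
          _ = D.card * (k * (r - 1)) := by rw [Finset.sum_const, smul_eq_mul]
          _ ≤ (r - 1) * (k * (r - 1)) := Nat.mul_le_mul_right _ hD2
    _ = (r - 1) * (1 + k * (r - 1)) := by ring

/-- almost `K_{1,r}`-free graphs of diameter at most `d` that are
`k`-colourable have at most `c = c(d,k,r)` vertices. -/
theorem stmt_3 (d k r : ℕ) (hd : 1 ≤ d) (hk : 1 ≤ k) (hr : 2 ≤ r) :
    ∃ c : ℕ, ∀ (V : Type) [Fintype V] (G : SimpleGraph V),
      G.Connected →
      (∀ u v : V, G.dist u v ≤ d) →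
      ({u : V | ∃ J : Finset V, (J : Set V) ⊆ G.neighborSet u ∧ J.card = r ∧
          (J : Set V).Pairwise fun a b => ¬ G.Adj a b}.Pairwise
        fun a b => ¬ G.Adj a b) →
      (∀ u : V, ∃ D : Finset V, (D : Set V) ⊆ G.neighborSet u ∧ D.card ≤ r - 1 ∧
          ∀ x ∈ G.neighborSet u, x ∈ D ∨ ∃ y ∈ D, G.Adj y x) →
      G.Colorable k →
      Fintype.card V ≤ c := by
  refine ⟨((r - 1) * (1 + k * (r - 1)) + 1) ^ d, ?_⟩
  intro V _ G hconn hdiam hcent hdom hcol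
  classical
  exact ball_bound G hconn hdiam (deg_bound G hk hr hcent hdom hcol)
end

section
/- Let G be a finite nonempty simple graph on vertex set V and let S ⊆ V be a maximal independent set of G. Let G' be the graph whose vertex set is V together with one new vertex x_{uv} for each 2-element subset {u,v} of S, where the adjacency on V is that of G, each x_{uv} is adjacent exactly to u and to v, and distinct new vertices are non-adjacent. Then: (i) every two vertices of G' are joined by a path of length at most 4 (G' is connected with diameter at most 4); (ii) if G is claw-free, then every vertex of G' that has three pairwise non-adjacent neighbours in G' belongs to S; and (iii) G' is 3-colourable if and only if G is 3-colourable. -/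
/-- The new vertices: one for each 2-element subset `{u,v}` of `S`. -/
def pairsOf {V : Type*} (S : Set V) : Type _ :=
  {p : Sym2 V // ¬ p.IsDiag ∧ ∀ x ∈ p, x ∈ S}

/-- The graph `G'`: the adjacency on `V` is that of `G`, each new vertex `x_{uv}`
is adjacent exactly to `u` and `v`, and distinct new vertices are non-adjacent. -/
def addPairVertices {V : Type*} (G : SimpleGraph V) (S : Set V) :
    SimpleGraph (V ⊕ pairsOf S) :=
  SimpleGraph.fromRel (fun x y =>
    match x, y with
    | Sum.inl a, Sum.inl b => G.Adj a b
    | Sum.inl a, Sum.inr p => a ∈ p.val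
    | _, _ => False)

/-- A vertex with three pairwise non-adjacent neighbours (a claw centre). -/
def IsClawCentre {X : Type*} (G : SimpleGraph X) (v : X) : Prop :=
  ∃ a b c : X, a ≠ b ∧ a ≠ c ∧ b ≠ c ∧
    G.Adj v a ∧ G.Adj v b ∧ G.Adj v c ∧
    ¬ G.Adj a b ∧ ¬ G.Adj a c ∧ ¬ G.Adj b c

section AuxLemmas
variable {V : Type*} {G : SimpleGraph V} {S : Set V}

lemma apv_adj_inl_inl {a b : V} :
    (addPairVertices G S).Adj (Sum.inl a) (Sum.inl b) ↔ G.Adj a b := by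
  rw [addPairVertices, SimpleGraph.fromRel_adj]
  constructor
  · rintro ⟨-, h | h⟩
    · exact h
    · exact h.symm
  · intro h
    exact ⟨fun he => h.ne (Sum.inl.inj he), Or.inl h⟩

lemma apv_adj_inl_inr {a : V} {p : pairsOf S} :
    (addPairVertices G S).Adj (Sum.inl a) (Sum.inr p) ↔ a ∈ p.val := by
  rw [addPairVertices, SimpleGraph.fromRel_adj]
  constructor
  · rintro ⟨-, h | h⟩
    · exact h
    · exact h.elim
  · intro h
    exact ⟨Sum.inl_ne_inr, Or.inl h⟩

lemma apv_not_adj_inr_inr {p q : pairsOf S} :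
    ¬ (addPairVertices G S).Adj (Sum.inr p) (Sum.inr q) := by
  rw [addPairVertices, SimpleGraph.fromRel_adj]
  rintro ⟨-, h | h⟩ <;> exact h

end AuxLemmas

/-- A colour distinct from both inputs, symmetric in the two inputs. -/
def thirdColour (a b : Fin 3) : Fin 3 := if a = b then a + 1 else -(a + b)

lemma thirdColour_comm : ∀ a b : Fin 3, thirdColour a b = thirdColour b a := by decide

lemma thirdColour_ne_left : ∀ a b : Fin 3, a ≠ thirdColour a b := by decide

/-- for a maximal independent set `S` of a nonempty graph `G`,
the graph `G'` (i) has every two vertices joined by a path of length at most 4,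
(ii) if `G` is claw-free then every claw centre of `G'` lies in `S`, and
(iii) `G'` is 3-colourable iff `G` is. -/
theorem stmt_9 {V : Type*} [Fintype V] [Nonempty V] (G : SimpleGraph V)
    (S : Set V)
    (hSindep : S.Pairwise fun a b => ¬ G.Adj a b)
    (hSmax : ∀ v : V, v ∉ S → ∃ s ∈ S, G.Adj v s) :
    (∀ x y : V ⊕ pairsOf S,
        ∃ w : (addPairVertices G S).Walk x y, w.length ≤ 4) ∧
    ((∀ v : V, ¬ IsClawCentre G v) →
        ∀ z : V ⊕ pairsOf S, IsClawCentre (addPairVertices G S) z →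
          ∃ s ∈ S, z = Sum.inl s) ∧
    ((addPairVertices G S).Colorable 3 ↔ G.Colorable 3) := by
  refine ⟨?_, ?_, ?_⟩
  · -- (i) any two vertices are joined by a path of length ≤ 4
    have toS : ∀ x : V ⊕ pairsOf S, ∃ s ∈ S,
        ∃ w : (addPairVertices G S).Walk x (Sum.inl s), w.length ≤ 1 := by
      rintro (v | p)
      · by_cases hv : v ∈ S
        · exact ⟨v, hv, .nil, by simp⟩
        · obtain ⟨s, hs, hadj⟩ := hSmax v hv
          exact ⟨s, hs, .cons (apv_adj_inl_inl.mpr hadj) .nil, by simp⟩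
      · have hu : p.val.out.1 ∈ p.val := Sym2.out_fst_mem p.val
        exact ⟨p.val.out.1, p.prop.2 _ hu,
          .cons (apv_adj_inl_inr.mpr hu).symm .nil, by simp⟩
    have mid : ∀ s ∈ S, ∀ t ∈ S,
        ∃ w : (addPairVertices G S).Walk (Sum.inl s) (Sum.inl t), w.length ≤ 2 := by
      intro s hs t ht
      by_cases hst : s = t
      · subst hst; exact ⟨.nil, by simp⟩
      · have hdiag : ¬ (s(s, t) : Sym2 V).IsDiag := by
          rw [Sym2.mk_isDiag_iff]; exact hst
        have hmem : ∀ x ∈ (s(s, t) : Sym2 V), x ∈ S := by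
          intro x hx
          rcases Sym2.mem_iff.mp hx with h | h <;> subst h <;> assumption
        let p : pairsOf S := ⟨s(s, t), hdiag, hmem⟩
        have h1 : (addPairVertices G S).Adj (Sum.inl s) (Sum.inr p) :=
          apv_adj_inl_inr.mpr (Sym2.mem_mk_left s t)
        have h2 : (addPairVertices G S).Adj (Sum.inr p) (Sum.inl t) :=
          (apv_adj_inl_inr.mpr (Sym2.mem_mk_right s t)).symm
        exact ⟨.cons h1 (.cons h2 .nil), by simp⟩
    intro x y
    obtain ⟨s, hs, w1, hw1⟩ := toS x
    obtain ⟨t, ht, w3, hw3⟩ := toS y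
    obtain ⟨w2, hw2⟩ := mid s hs t ht
    refine ⟨(w1.append w2).append w3.reverse, ?_⟩
    simp only [SimpleGraph.Walk.length_append, SimpleGraph.Walk.length_reverse]
    omega
  · -- (ii) claw centres of G' lie in S
    intro hfree z hz
    obtain ⟨a, b, c, hab, hac, hbc, hza, hzb, hzc, hnab, hnac, hnbc⟩ := hz
    rcases z with v | p
    · refine ⟨v, ?_, rfl⟩
      by_contra hv
      have mem : ∀ y : V ⊕ pairsOf S, (addPairVertices G S).Adj (Sum.inl v) y →
          ∃ a', y = Sum.inl a' ∧ G.Adj v a' := by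
        rintro (a' | q) h
        · exact ⟨a', rfl, apv_adj_inl_inl.mp h⟩
        · exact absurd (q.prop.2 v (apv_adj_inl_inr.mp h)) hv
      obtain ⟨a', rfl, ha⟩ := mem a hza
      obtain ⟨b', rfl, hb⟩ := mem b hzb
      obtain ⟨c', rfl, hc⟩ := mem c hzc
      exact hfree v ⟨a', b', c',
        fun h => hab (by rw [h]), fun h => hac (by rw [h]), fun h => hbc (by rw [h]),
        ha, hb, hc,
        fun h => hnab (apv_adj_inl_inl.mpr h),
        fun h => hnac (apv_adj_inl_inl.mpr h),
        fun h => hnbc (apv_adj_inl_inl.mpr h)⟩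
    · exfalso
      have mem : ∀ y : V ⊕ pairsOf S, (addPairVertices G S).Adj (Sum.inr p) y →
          ∃ a', y = Sum.inl a' ∧ a' ∈ p.val := by
        rintro (a' | q) h
        · exact ⟨a', rfl, apv_adj_inl_inr.mp h.symm⟩
        · exact absurd h apv_not_adj_inr_inr
      obtain ⟨a', rfl, ha⟩ := mem a hza
      obtain ⟨b', rfl, hb⟩ := mem b hzb
      obtain ⟨c', rfl, hc⟩ := mem c hzc
      have hab' : a' ≠ b' := fun h => hab (by rw [h])
      have hpv : p.val = s(a', b') := (Sym2.mem_and_mem_iff hab').mp ⟨ha, hb⟩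
      rw [hpv] at hc
      rcases Sym2.mem_iff.mp hc with h | h
      · exact hac (by rw [h])
      · exact hbc (by rw [h])
  · -- (iii) 3-colourability
    constructor
    · rintro ⟨C⟩
      exact ⟨SimpleGraph.Coloring.mk (fun v => C (Sum.inl v))
        (fun h => C.valid (apv_adj_inl_inl.mpr h))⟩
    · rintro ⟨C⟩
      refine ⟨SimpleGraph.Coloring.mk
        (Sum.elim (fun v => C v)
          (fun p => Sym2.lift ⟨fun u w => thirdColour (C u) (C w),
            fun u w => thirdColour_comm (C u) (C w)⟩ p.val)) ?_⟩
      rintro (a | p) (b | q) h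
      · exact C.valid (apv_adj_inl_inl.mp h)
      · simp only [Sum.elim_inl, Sum.elim_inr]
        obtain ⟨b', hb'⟩ := Sym2.mem_iff_exists.mp (apv_adj_inl_inr.mp h)
        rw [hb', Sym2.lift_mk]
        exact thirdColour_ne_left (C a) (C b')
      · simp only [Sum.elim_inl, Sum.elim_inr]
        obtain ⟨b', hb'⟩ := Sym2.mem_iff_exists.mp (apv_adj_inl_inr.mp h.symm)
        rw [hb', Sym2.lift_mk]
        exact (thirdColour_ne_left (C b) (C b')).symm
      · exact absurd h apv_not_adj_inr_inr
end

section
/- Let G be an S_{1,2,2}-free simple graph. Suppose x1, x2, x3, x4, x5 induce a 5-cycle in G (the x_i are distinct and the edges among them are exactly x1x2, x2x3, x3x4, x4x5, x5x1). Let u be a vertex adjacent to none of x1,…,x5 and distinct from them, and let v be a vertex adjacent to u and to at least one of x1,…,x5. Then there is an index i (taken modulo 5) such that v is adjacent to both x_i and x_{i+1}. -/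
/-- The tree `S_{1,2,2}`: centre `0` adjacent to `1`, `2` and `4`, with the extra
edges `2-3` and `4-5`. -/
def S122 : SimpleGraph (Fin 6) :=
  SimpleGraph.fromEdgeSet {s(0, 1), s(0, 2), s(2, 3), s(0, 4), s(4, 5)}

/-- Adjacency in `S122`, made explicit. -/
lemma S122_adj : ∀ a b : Fin 6, S122.Adj a b ↔
    (a,b) ∈ [((0:Fin 6),(1:Fin 6)),(1,0),(0,2),(2,0),(2,3),(3,2),(0,4),(4,0),(4,5),(5,4)] := by
  intro a b
  simp only [S122, SimpleGraph.fromEdgeSet_adj, Set.mem_insert_iff, Set.mem_singleton_iff,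
    Sym2.eq, Sym2.rel_iff', Prod.mk.injEq, Prod.swap_prod_mk, List.mem_cons, List.not_mem_nil]
  fin_cases a <;> fin_cases b <;> decide

/-- in an `S_{1,2,2}`-free graph with an induced 5-cycle
`x 0, …, x 4`, if `u` is adjacent to no cycle vertex and distinct from them all,
and `v` is adjacent to `u` and to some cycle vertex, then `v` is adjacent to two
consecutive cycle vertices. -/
theorem stmt_10 {V : Type*} [Fintype V] (G : SimpleGraph V)
    (hfree : ¬ Nonempty (S122 ↪g G))
    (x : Fin 5 → V) (hinj : Function.Injective x)
    (hcyc : ∀ i j : Fin 5, G.Adj (x i) (x j) ↔ j = i + 1 ∨ i = j + 1)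
    (u : V) (hu1 : ∀ i, u ≠ x i) (hu2 : ∀ i, ¬ G.Adj u (x i))
    (v : V) (huv : G.Adj u v) (hv : ∃ i, G.Adj v (x i)) :
    ∃ i : Fin 5, G.Adj v (x i) ∧ G.Adj v (x (i + 1)) := by
  by_contra hcon
  push_neg at hcon
  have hvx : ∀ i, v ≠ x i := fun i h => hu2 i (h ▸ huv)
  obtain ⟨i, hi⟩ := hv
  have key : ∃ j, G.Adj v (x j) ∧ ¬ G.Adj v (x (j+1)) ∧ ¬ G.Adj v (x (j-1)) ∧
      ¬ G.Adj v (x (j-2)) := by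
    by_cases h2 : G.Adj v (x (i-2))
    · refine ⟨i-2, h2, hcon (i-2) h2, ?_, ?_⟩
      · intro h
        have e : (i-2) - 1 + 1 = i - 2 := by omega
        exact hcon ((i-2)-1) h (by rw [e]; exact h2)
      · have e : (i-2) - 2 = i + 1 := by omega
        rw [e]; exact hcon i hi
    · refine ⟨i, hi, hcon i hi, ?_, h2⟩
      intro h
      have e : i - 1 + 1 = i := by omega
      exact hcon (i-1) h (by rw [e]; exact hi)
  obtain ⟨j, hj, hj1, hj2, hj3⟩ := key
  set f : Fin 6 → V := ![x j, x (j+1), v, u, x (j-1), x (j-2)] with hf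
  have m5 : (![x j, x (j+1), v, u, x (j-1), x (j-2)] : Fin 6 → V) 5 = x (j-2) := rfl
  have hvj : G.Adj (x j) v := hj.symm
  have huv' : G.Adj v u := huv.symm
  have hux : ∀ p, ¬ G.Adj (x p) u := fun p h => hu2 p h.symm
  have hxv1 : ¬ G.Adj (x (j + 1)) v := fun h => hj1 h.symm
  have hxv2 : ¬ G.Adj (x (j - 1)) v := fun h => hj2 h.symm
  have hxv3 : ¬ G.Adj (x (j - 2)) v := fun h => hj3 h.symm
  have hG : ∀ a b : Fin 6, G.Adj (f a) (f b) ↔ S122.Adj a b := by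
    intro a b
    rw [S122_adj]
    fin_cases a <;> fin_cases b <;>
      simp [hf, m5, hcyc, hj, hj1, hj2, hj3, hvj, huv, huv', hu2, hux, hxv1, hxv2, hxv3] <;>
      first | omega | decide
  have hfinj : Function.Injective f := by
    intro a b hab
    fin_cases a <;> fin_cases b <;>
      first
        | rfl
        | (exfalso
           simp only [hf, Matrix.cons_val_zero, Matrix.cons_val_one, Matrix.head_cons,
             Matrix.cons_val', Matrix.cons_val_succ, Matrix.cons_val_fin_one, m5] at hab
           first
             | exact hvx _ hab
             | exact hvx _ hab.symm
             | exact hu1 _ hab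
             | exact hu1 _ hab.symm
             | exact huv.ne hab
             | exact huv.ne' hab
             | exact huv.ne hab.symm
             | (have := hinj hab; omega))
  exact hfree ⟨⟨⟨f, hfinj⟩, fun {a b} => hG a b⟩⟩
end

section
/- Let G be a finite simple graph such that (a) every two distinct non-adjacent vertices of G have a common neighbour, and (b) the set of vertices of G having three pairwise non-adjacent neighbours is an independent set. Suppose u1, u2, u3, u4, u5 induce a 5-cycle in G, and let x be a vertex adjacent to none of u1,…,u5 and distinct from them. Then x has a neighbour v such that v is adjacent to two consecutive vertices u_i and u_{i+1} of the cycle (indices modulo 5). -/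
/-- in a graph in which every two distinct non-adjacent vertices
have a common neighbour and the claw centres form an independent set, every
vertex `x` outside and non-adjacent to an induced 5-cycle has a neighbour that is
adjacent to two consecutive cycle vertices. -/
theorem stmt_11 {V : Type*} [Fintype V] (G : SimpleGraph V)
    (hdiam : ∀ a b : V, a ≠ b → ¬ G.Adj a b → ∃ w : V, G.Adj a w ∧ G.Adj b w)
    (hind : {v : V | IsClawCentre G v}.Pairwise fun a b => ¬ G.Adj a b)
    (u : Fin 5 → V) (hinj : Function.Injective u)
    (hcyc : ∀ i j : Fin 5, G.Adj (u i) (u j) ↔ j = i + 1 ∨ i = j + 1)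
    (x : V) (hx1 : ∀ i, x ≠ u i) (hx2 : ∀ i, ¬ G.Adj x (u i)) :
    ∃ v : V, G.Adj x v ∧ ∃ i : Fin 5, G.Adj v (u i) ∧ G.Adj v (u (i + 1)) := by
  by_contra hcon
  push_neg at hcon
  have key1 : ∀ i : Fin 5, i - 1 + 1 = i := by decide
  have key2 : ∀ i : Fin 5, ¬((i : Fin 5) + 1 = i - 1 + 1 ∨ i - 1 = i + 1 + 1) := by decide
  have key3 : ∀ i : Fin 5, (i : Fin 5) - 1 ≠ i + 1 := by decide
  have claw : ∀ i : Fin 5, IsClawCentre G (u i) := by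
    intro i
    obtain ⟨w, hxw, huw⟩ := hdiam x (u i) (hx1 i) (hx2 i)
    have hne : ∀ j, w ≠ u j := fun j h => hx2 j (h ▸ hxw)
    have h1 : ¬ G.Adj w (u (i + 1)) := fun h => hcon w hxw i huw.symm h
    have h2 : ¬ G.Adj w (u (i - 1)) := fun h =>
      hcon w hxw (i - 1) h (by rw [key1 i]; exact huw.symm)
    refine ⟨u (i - 1), u (i + 1), w, fun h => key3 i (hinj h), (hne _).symm,
      (hne _).symm, ?_, ?_, huw, ?_, ?_, ?_⟩
    · rw [hcyc]; right; exact (key1 i).symm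
    · rw [hcyc]; left; rfl
    · rw [hcyc]; exact key2 i
    · exact fun h => h2 h.symm
    · exact fun h => h1 h.symm
  have adj01 : G.Adj (u 0) (u 1) := by rw [hcyc]; left; rfl
  exact hind (claw 0) (claw 1) (fun h => by simpa using hinj h) adj01
end

section
/- Let G be an S_{1,1,2}-free (chair-free) simple graph and let t, u, v be three distinct vertices with t adjacent to u, u adjacent to v, and t not adjacent to v. Let W be the set of all vertices w with w adjacent to v, w ∉ {t,u}, w not adjacent to u, and w not adjacent to t. Then any two distinct vertices of W are adjacent (W is a clique). Moreover, if G additionally contains no clique on four vertices (K_4-free), then |W| ≤ 2. -/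
/-!
Two non-adjacent vertices `w₁, w₂ ∈ W` would be the leaves of a chair centred at `v` with tail
`v - u - t`. Hence `W ∪ {v}` is a clique, which has at most three vertices when `G` is `K₄`-free.
-/

/-- The chair `S_{1,1,2}`: centre `0` adjacent to `1`, `2` and `3`, with the
extra edge `3-4`. -/
def chair : SimpleGraph (Fin 5) :=
  SimpleGraph.fromEdgeSet {s(0, 1), s(0, 2), s(0, 3), s(3, 4)}

namespace SimpleGraph

variable {V : Type*} {G : SimpleGraph V}

lemma nonempty_chair_embedding {c a b p q : V}
    (hca : G.Adj c a) (hcb : G.Adj c b) (hcp : G.Adj c p) (hpq : G.Adj p q)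
    (hab : ¬ G.Adj a b) (hap : ¬ G.Adj a p) (haq : ¬ G.Adj a q)
    (hbp : ¬ G.Adj b p) (hbq : ¬ G.Adj b q) (hcq : ¬ G.Adj c q)
    (hab' : a ≠ b) (hap' : a ≠ p) (hbp' : b ≠ p) (hcq' : c ≠ q) :
    Nonempty (chair ↪g G) := by
  have hca' := hca.ne
  have hcb' := hcb.ne
  have hcp' := hcp.ne
  have hpq' := hpq.ne
  have haq' : a ≠ q := by rintro rfl; exact hcq hca
  have hbq' : b ≠ q := by rintro rfl; exact hcq hcb
  refine ⟨⟨⟨![c, a, b, p, q], fun i j hij => ?_⟩, fun {i j} => ?_⟩⟩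
  · fin_cases i <;> fin_cases j <;> simp_all [eq_comm]
  · change G.Adj (![c, a, b, p, q] i) (![c, a, b, p, q] j) ↔ chair.Adj i j
    fin_cases i <;> fin_cases j <;> simp_all [chair, adj_comm]

lemma isClique_of_chairFree (hfree : ¬ Nonempty (chair ↪g G)) {c p q : V}
    (hcp : G.Adj c p) (hpq : G.Adj p q) (hcq : ¬ G.Adj c q) (hcq' : c ≠ q) :
    G.IsClique {w | G.Adj c w ∧ w ≠ p ∧ ¬ G.Adj w p ∧ ¬ G.Adj w q} := by
  rintro a ⟨hca, hap', hap, haq⟩ b ⟨hcb, hbp', hbp, hbq⟩ hab'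
  by_contra hab
  exact hfree (nonempty_chair_embedding hca hcb hcp hpq hab hap haq hbp hbq hcq hab' hap' hbp' hcq')

lemma IsClique.ncard_lt_of_subset_neighborSet {n : ℕ} {s : Set V} {v : V}
    (hG : G.CliqueFree (n + 1)) (hs : G.IsClique s) (hsv : s ⊆ G.neighborSet v) :
    s.ncard < n := by
  classical
  cases n with
  | zero => exact (cliqueFree_one.mp hG).elim v
  | succ n =>
    by_contra! hn
    obtain ⟨t, hts, htn⟩ := Set.exists_subset_card_eq hn
    have ht : t.Finite := Set.finite_of_ncard_pos (by omega)
    have hT : G.IsNClique (n + 1) ht.toFinset :=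
      ⟨by simpa using hs.subset hts, by rw [← htn, Set.ncard_eq_toFinset_card t ht]⟩
    exact (hT.insert (a := v) fun w hw => hsv (hts (ht.mem_toFinset.mp hw))).not_cliqueFree hG

end SimpleGraph

theorem stmt_12_general {V : Type*} (G : SimpleGraph V)
    (hfree : ¬ Nonempty (chair ↪g G))
    (t u v : V) (htv : t ≠ v) (htu : G.Adj t u) (huv : G.Adj u v)
    (hntv : ¬ G.Adj t v) :
    ({w : V | G.Adj v w ∧ w ≠ t ∧ w ≠ u ∧ ¬ G.Adj w u ∧ ¬ G.Adj w t}.Pairwise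
        G.Adj) ∧
    (G.CliqueFree 4 →
      {w : V | G.Adj v w ∧ w ≠ t ∧ w ≠ u ∧ ¬ G.Adj w u ∧ ¬ G.Adj w t}.ncard ≤ 2) := by
  set W := {w : V | G.Adj v w ∧ w ≠ t ∧ w ≠ u ∧ ¬ G.Adj w u ∧ ¬ G.Adj w t}
  have hW : G.IsClique W := by
    refine (SimpleGraph.isClique_of_chairFree hfree huv.symm htu.symm (fun h => hntv h.symm)
      htv.symm).subset fun w hw => ?_
    exact ⟨hw.1, hw.2.2.1, hw.2.2.2⟩
  refine ⟨hW, fun hK₄ => ?_⟩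
  have := hW.ncard_lt_of_subset_neighborSet (n := 3) hK₄ fun w hw => hw.1
  omega

/-- in a chair-free graph with an induced path `t - u - v`, the set
`W` of neighbours of `v` outside `{t,u}` adjacent to neither `u` nor `t` is a
clique; if moreover `G` is `K_4`-free, then `|W| ≤ 2`. -/
theorem stmt_12 {V : Type*} [Fintype V] (G : SimpleGraph V)
    (hfree : ¬ Nonempty (chair ↪g G))
    (t u v : V) (htv : t ≠ v) (htu : G.Adj t u) (huv : G.Adj u v)
    (hntv : ¬ G.Adj t v) :
    ({w : V | G.Adj v w ∧ w ≠ t ∧ w ≠ u ∧ ¬ G.Adj w u ∧ ¬ G.Adj w t}.Pairwise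
        G.Adj) ∧
    (G.CliqueFree 4 →
      {w : V | G.Adj v w ∧ w ≠ t ∧ w ≠ u ∧ ¬ G.Adj w u ∧ ¬ G.Adj w t}.ncard ≤ 2) :=
  stmt_12_general G hfree t u v htv htu huv hntv
end

section
/- Let r ≥ 2 be an integer and let G be a K_{1,r}^2-free simple graph. Suppose x1, x2, x3, x4, x5 induce a 5-cycle in G, and let v be a vertex not among x1,…,x5 that is adjacent to x1 and to none of x2, x3, x4, x5 (a private neighbour of x1 with respect to the cycle). Let Q be the set of neighbours of v that are adjacent to none of x1,…,x5 and distinct from them. Then Q contains no r−1 pairwise non-adjacent vertices; that is, among any r−1 distinct vertices of Q some two are adjacent. -/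
/-- `G` is `K_{1,r}^2`-free: there are no `r+3` distinct vertices
`c, l 0, …, l (r-2), s1, s2, s3` whose edges among them are exactly
`c-(l i)` for all `i`, `c-s1`, `s1-s2` and `s2-s3`. -/
def K1r2Free {V : Type*} (r : ℕ) (G : SimpleGraph V) : Prop :=
  ¬ ∃ (c s1 s2 s3 : V) (l : Fin (r - 1) → V),
      Function.Injective l ∧
      (∀ i, c ≠ l i ∧ s1 ≠ l i ∧ s2 ≠ l i ∧ s3 ≠ l i) ∧
      c ≠ s1 ∧ c ≠ s2 ∧ c ≠ s3 ∧ s1 ≠ s2 ∧ s1 ≠ s3 ∧ s2 ≠ s3 ∧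
      (∀ i, G.Adj c (l i)) ∧ G.Adj c s1 ∧ G.Adj s1 s2 ∧ G.Adj s2 s3 ∧
      (∀ i j, i ≠ j → ¬ G.Adj (l i) (l j)) ∧
      (∀ i, ¬ G.Adj (l i) s1 ∧ ¬ G.Adj (l i) s2 ∧ ¬ G.Adj (l i) s3) ∧
      ¬ G.Adj c s2 ∧ ¬ G.Adj c s3 ∧ ¬ G.Adj s1 s3

/-- in a `K_{1,r}^2`-free graph with an induced 5-cycle
`x 0, …, x 4`, if `v` is a private neighbour of `x 0` with respect to the cycle
(adjacent to `x 0`, not among the `x i`, and adjacent to no other cycle vertex),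
then the set of neighbours of `v` that avoid the cycle and its neighbourhood
contains no `r-1` pairwise non-adjacent vertices. -/
theorem stmt_17 {V : Type*} [Fintype V] (r : ℕ) (hr : 2 ≤ r)
    (G : SimpleGraph V) (hfree : K1r2Free r G)
    (x : Fin 5 → V) (hinj : Function.Injective x)
    (hcyc : ∀ i j : Fin 5, G.Adj (x i) (x j) ↔ j = i + 1 ∨ i = j + 1)
    (v : V) (hv0 : ∀ i, v ≠ x i) (hv1 : G.Adj v (x 0))
    (hv2 : ∀ i, i ≠ 0 → ¬ G.Adj v (x i)) :
    ∀ f : Fin (r - 1) → V, Function.Injective f →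
      (∀ i, G.Adj v (f i) ∧ (∀ j, f i ≠ x j) ∧ ∀ j, ¬ G.Adj (f i) (x j)) →
      ∃ i j, i ≠ j ∧ G.Adj (f i) (f j) := by
  intro f hfinj hf
  by_contra hcon
  push_neg at hcon
  apply hfree
  refine ⟨v, x 0, x 4, x 3, f, hfinj, ?_, hv0 0, hv0 4, hv0 3,
    fun h => by simpa using hinj h, fun h => by simpa using hinj h,
    fun h => by simpa using hinj h,
    fun i => (hf i).1, hv1, ?_, ?_, fun i j hij => hcon i j hij, ?_, ?_, ?_, ?_⟩
  · intro i
    exact ⟨G.ne_of_adj (hf i).1, ((hf i).2.1 0).symm, ((hf i).2.1 4).symm,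
      ((hf i).2.1 3).symm⟩
  · rw [hcyc]; right; decide
  · rw [hcyc]; right; decide
  · intro i
    exact ⟨(hf i).2.2 0, (hf i).2.2 4, (hf i).2.2 3⟩
  · exact hv2 4 (by decide)
  · exact hv2 3 (by decide)
  · rw [hcyc]; decide
end
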